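/- arXiv:1311.2497 — 3 statements merged into one kernel-verified Lean document; each statement's English description precedes it below -/
import Mathlib

section
/- Let n ≥ 1, N ≥ 2 and 1 ≤ d ≤ 2N−2. Let p_1,…,p_N ∈ ℂ^{n+1} be nonzero, pairwise non-proportional vectors all contained in a common 2-dimensional linear subspace of ℂ^{n+1} (so the corresponding N distinct points of ℙ^n are collinear). Then the linear subspace W = {f ∈ V_{d,n} : f is singular at each p_j} has codimension at most N(n−1)+d+1 in V_{d,n}; in particular its codimension is at most N(n+1)−1. -/
open MvPolynomial
/-- `V_{d,n}`: the space of homogeneous polynomials of degree `d` in `x_0, …, x_n`. -/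
noncomputable def Vdn (n d : ℕ) : Submodule ℂ (MvPolynomial (Fin (n+1)) ℂ) :=
  MvPolynomial.homogeneousSubmodule (Fin (n+1)) ℂ d

/-- `f` is singular at the point `p ∈ ℂ^{n+1}`: all partial derivatives vanish at `p`. -/
def SingularAt {n : ℕ} (f : MvPolynomial (Fin (n+1)) ℂ) (p : Fin (n+1) → ℂ) : Prop :=
  ∀ i, MvPolynomial.eval p (MvPolynomial.pderiv i f) = 0

/-- The subspace `W` of `V_{d,n}` of polynomials singular at each of the points
`p 0, …, p (N-1)`. -/
noncomputable def Wsub (n d N : ℕ) (p : Fin N → (Fin (n+1) → ℂ)) :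
    Submodule ℂ (Vdn n d) where
  carrier := {f | ∀ j, SingularAt (f : MvPolynomial (Fin (n+1)) ℂ) (p j)}
  add_mem' := by
    intro a b ha hb j i
    simp only [Submodule.coe_add, map_add, ha j i, hb j i, add_zero]
  zero_mem' := by
    intro j i
    simp
  smul_mem' := by
    intro c f hf j i
    rw [SetLike.val_smul, Derivation.map_smul, MvPolynomial.smul_eval, hf j i, mul_zero]

/-!
Let `P` be the plane through the points and `Q` a complement of `P`. If a form `f` vanishes
identically on `P` and its derivatives at each `p j` in the directions of `Q` vanish, then `f`
is singular at every `p j`: its differential at `p j ∈ P` kills `P` (differentiate `f` along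
lines in `P`) as well as `Q`. The first condition says that a binary form of degree `d`, the
pullback of `f` to `P`, is zero, which is `d + 1` linear conditions; the second is `n - 1`
linear conditions per point. So `W` contains the kernel of a linear map into a space of dimension
`d + 1 + N (n - 1)`.
-/

open Module

namespace MvPolynomial

section Derivative

variable {R σ : Type*} [CommSemiring R] [Fintype σ]

theorem derivative_aeval (L : σ → Polynomial R) (f : MvPolynomial σ R) :
    Polynomial.derivative (aeval L f) =
      ∑ i, aeval L (pderiv i f) * Polynomial.derivative (L i) := by
  classical
  induction f using MvPolynomial.induction_on with
  | C a => simp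
  | add f g hf hg => simp [hf, hg, add_mul, Finset.sum_add_distrib]
  | mul_X f j hf =>
    simp only [map_mul, aeval_X, Polynomial.derivative_mul, hf, Derivation.leibniz, pderiv_X,
      Pi.single_apply, smul_eq_mul, mul_ite, mul_one, mul_zero, map_add, add_mul,
      Finset.sum_add_distrib, apply_ite (aeval L), map_zero, ite_mul, zero_mul,
      Finset.sum_ite_eq, Finset.mem_univ, if_true, Finset.sum_mul]
    rw [add_comm]
    exact congrArg₂ _ rfl (Finset.sum_congr rfl fun _ _ => by ring)

noncomputable def differentialAt (q : σ → R) : MvPolynomial σ R →ₗ[R] Dual R (σ → R) :=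
  ∑ i, ((aeval q).toLinearMap ∘ₗ (pderiv i).toLinearMap).smulRight (LinearMap.proj i)

theorem differentialAt_apply (q y : σ → R) (f : MvPolynomial σ R) :
    differentialAt q f y = ∑ i, eval q (pderiv i f) * y i := by
  simp [differentialAt]

theorem differentialAt_single [DecidableEq σ] (q : σ → R) (f : MvPolynomial σ R) (i : σ) :
    differentialAt q f (Pi.single i 1) = eval q (pderiv i f) := by
  simp [differentialAt_apply, Pi.single_apply]

end Derivative

section Line

variable {R σ : Type*} [CommRing R] [IsDomain R] [Infinite R] [Fintype σ]

theorem differentialAt_apply_eq_zero_of_eval_add_smul_eq_zero {q y : σ → R}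
    {f : MvPolynomial σ R} (h : ∀ t : R, eval (q + t • y) f = 0) :
    differentialAt q f y = 0 := by
  let L : σ → Polynomial R := fun i => Polynomial.C (q i) + Polynomial.C (y i) * Polynomial.X
  have eval_aeval_L (g : MvPolynomial σ R) (t : R) : (aeval L g).eval t = eval (q + t • y) g := by
    rw [← Polynomial.coe_aeval_eq_eval, comp_aeval_apply]
    have : (fun i => Polynomial.aeval t (L i)) = q + t • y := by
      funext i
      simp only [L, Polynomial.coe_aeval_eq_eval, Polynomial.eval_add, Polynomial.eval_C,
        Polynomial.eval_mul, Polynomial.eval_X, Pi.add_apply, Pi.smul_apply, smul_eq_mul]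
      ring
    rw [this]; rfl
  have hL : aeval L f = 0 := Polynomial.funext fun t => by simp [eval_aeval_L, h]
  have := congrArg (Polynomial.eval 0) (derivative_aeval L f)
  simpa [hL, Polynomial.eval_finsetSum, eval_aeval_L, L, differentialAt_apply] using this.symm

theorem differentialAt_eq_zero_of_sup_eq_top {P Q : Submodule R (σ → R)} (hPQ : P ⊔ Q = ⊤)
    {f : MvPolynomial σ R} {p : σ → R} (hp : p ∈ P) (hfP : ∀ q ∈ P, eval q f = 0)
    (hfQ : ∀ y ∈ Q, differentialAt p f y = 0) : differentialAt p f = 0 := by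
  have hP : P ≤ LinearMap.ker (differentialAt p f) := fun y hy =>
    differentialAt_apply_eq_zero_of_eval_add_smul_eq_zero fun t =>
      hfP _ (P.add_mem hp (P.smul_mem t hy))
  exact LinearMap.ker_eq_top.mp (top_unique (hPQ ▸ sup_le hP hfQ))

end Line

section LinearSubstitution

variable {R σ ι : Type*} [CommSemiring R] [Fintype ι] [DecidableEq ι]

noncomputable def compLinearMap (φ : (ι → R) →ₗ[R] (σ → R)) :
    MvPolynomial σ R →ₐ[R] MvPolynomial ι R :=
  aeval fun i => ∑ k, C (φ (Pi.single k 1) i) * X k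

theorem eval_compLinearMap (φ : (ι → R) →ₗ[R] (σ → R)) (x : ι → R) (f : MvPolynomial σ R) :
    eval x (compLinearMap φ f) = eval (φ x) f := by
  have hφ : φ x = ∑ k, x k • φ (Pi.single k 1) := by
    simp_rw [← map_smul, ← Pi.single_smul', smul_eq_mul, mul_one, ← map_sum,
      Finset.univ_sum_single]
  rw [← coe_aeval_eq_eval, ← coe_aeval_eq_eval, AlgHom.coe_toRingHom, AlgHom.coe_toRingHom,
    compLinearMap, comp_aeval_apply, hφ]
  congr 2
  funext i
  simp [mul_comm]

theorem IsHomogeneous.compLinearMap {f : MvPolynomial σ R} {d : ℕ} (hf : f.IsHomogeneous d)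
    (φ : (ι → R) →ₗ[R] (σ → R)) : (compLinearMap φ f).IsHomogeneous d := by
  simpa [MvPolynomial.compLinearMap] using hf.aeval _ fun i =>
    IsHomogeneous.sum _ _ _ fun k _ => isHomogeneous_C_mul_X (φ (Pi.single k 1) i) k

end LinearSubstitution

instance finite_homogeneousSubmodule {R σ : Type*} [CommSemiring R] [Finite σ] (d : ℕ) :
    Module.Finite R (homogeneousSubmodule σ R d) :=
  Module.Finite.iff_fg.mpr (homogeneousSubmodule_fg σ R d)

theorem finrank_homogeneousSubmodule {K σ : Type*} [Field K] [Fintype σ] (d : ℕ) :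
    finrank K (homogeneousSubmodule σ K d) = (Fintype.card σ).multichoose d := by
  classical
  let e : Sym σ d ≃ {m : σ →₀ ℕ | m.degree = d} :=
    (Sym.equivNatSum σ d).trans <| Equiv.subtypeEquivRight fun m => by
      simp [Finsupp.degree_apply, Finsupp.sum]
  let : Fintype {m : σ →₀ ℕ | m.degree = d} := Fintype.ofEquiv _ e
  rw [homogeneousSubmodule_eq_finsupp_supported, ← Sym.card_sym_eq_multichoose,
    Fintype.card_congr e]
  exact finrank_eq_card_basis (basisRestrictSupport K _)

end MvPolynomial

theorem LinearMap.finrank_le_finrank_add_finrank_of_ker_le {K V U : Type*} [Field K]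
    [AddCommGroup V] [Module K V] [AddCommGroup U] [Module K U] [Module.Finite K V]
    [Module.Finite K U] (φ : V →ₗ[K] U) {W : Submodule K V} (h : LinearMap.ker φ ≤ W) :
    finrank K V ≤ finrank K W + finrank K U := by
  have := φ.finrank_range_add_finrank_ker
  have := Submodule.finrank_mono h
  have := (LinearMap.range φ).finrank_le
  omega

theorem singularAt_of_differentialAt_eq_zero {n : ℕ} {f : MvPolynomial (Fin (n + 1)) ℂ}
    {p : Fin (n + 1) → ℂ} (h : differentialAt p f = 0) : SingularAt f p := fun i => by
  rw [← differentialAt_single, h, LinearMap.zero_apply]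

instance (n d : ℕ) : Module.Finite ℂ (Vdn n d) :=
  inferInstanceAs (Module.Finite ℂ (homogeneousSubmodule (Fin (n + 1)) ℂ d))

theorem finrank_Vdn (n d : ℕ) : finrank ℂ (Vdn n d) = (d + n).choose n := by
  rw [Vdn, finrank_homogeneousSubmodule, Fintype.card_fin, Nat.multichoose_eq,
    show n + 1 + d - 1 = d + n by omega, Nat.choose_symm_add]

theorem singularAt_of_compLinearMap_eq_zero {n : ℕ} {ι : Type*} [Fintype ι] [DecidableEq ι]
    {φ : (ι → ℂ) →ₗ[ℂ] (Fin (n + 1) → ℂ)} {Q : Submodule ℂ (Fin (n + 1) → ℂ)}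
    (hφQ : LinearMap.range φ ⊔ Q = ⊤) {f : MvPolynomial (Fin (n + 1)) ℂ}
    (hf : compLinearMap φ f = 0) {p : Fin (n + 1) → ℂ} (hp : p ∈ LinearMap.range φ)
    (hfQ : ∀ y ∈ Q, differentialAt p f y = 0) : SingularAt f p := by
  refine singularAt_of_differentialAt_eq_zero <| differentialAt_eq_zero_of_sup_eq_top hφQ hp ?_ hfQ
  rintro _ ⟨x, rfl⟩
  rw [← eval_compLinearMap, hf, map_zero]

theorem codim_singular_subspace_of_collinear_general (n N d : ℕ) (hN : 2 ≤ N) (hd2 : d ≤ 2 * N - 2)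
    (p : Fin N → (Fin (n+1) → ℂ))
    (hcol : ∃ P : Submodule ℂ (Fin (n+1) → ℂ), Module.finrank ℂ P = 2 ∧ ∀ j, p j ∈ P) :
    Nat.choose (d+n) n ≤ Module.finrank ℂ (Wsub n d N p) + (N * (n-1) + d + 1) ∧
      Nat.choose (d+n) n + 1 ≤ Module.finrank ℂ (Wsub n d N p) + N * (n+1) := by
  obtain ⟨P, hP, hpP⟩ := hcol
  obtain ⟨Q, hPQ⟩ := P.exists_isCompl
  have hQ : finrank ℂ Q + 2 = n + 1 := by
    rw [← hP, add_comm, Submodule.finrank_add_eq_of_isCompl hPQ, finrank_fin_fun]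
  let φ : (Fin 2 → ℂ) →ₗ[ℂ] (Fin (n + 1) → ℂ) :=
    P.subtype ∘ₗ (finBasisOfFinrankEq ℂ P hP).equivFun.symm.toLinearMap
  have hφ : LinearMap.range φ = P := by
    simp [φ, LinearMap.range_comp]
  let Φ : Vdn n d →ₗ[ℂ] homogeneousSubmodule (Fin 2) ℂ d × (Fin N → Dual ℂ Q) :=
    ((compLinearMap φ).toLinearMap.restrict
      fun _ (hf : _ ∈ homogeneousSubmodule _ ℂ d) => hf.compLinearMap φ).prod
      (LinearMap.pi fun j => Q.subtype.dualMap ∘ₗ differentialAt (p j) ∘ₗ (Vdn n d).subtype)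
  have hker : LinearMap.ker Φ ≤ Wsub n d N p := fun f hf j => by
    obtain ⟨hsubst, hdiff⟩ := Prod.mk_eq_zero.mp (LinearMap.mem_ker.mp hf)
    exact singularAt_of_compLinearMap_eq_zero (hφ ▸ hPQ.sup_eq_top) (congrArg Subtype.val hsubst)
      (hφ ▸ hpP j) fun y hy => LinearMap.congr_fun (congrFun hdiff j) ⟨y, hy⟩
  have hcodim := Φ.finrank_le_finrank_add_finrank_of_ker_le hker
  simp only [finrank_Vdn, finrank_prod, finrank_homogeneousSubmodule, Fintype.card_fin,
    Nat.multichoose_two, finrank_pi_fintype, Subspace.dual_finrank_eq, Finset.sum_const,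
    Finset.card_univ, smul_eq_mul] at hcodim
  generalize finrank ℂ Q = r at hQ hcodim
  have hnr : N * (n + 1) = N * r + 2 * N := by rw [← hQ]; ring
  rw [hnr, show n - 1 = r by omega]
  omega

/-- For `N ≥ 2` collinear distinct points of `ℙⁿ` and `d ≤ 2N−2`, the subspace of degree-`d`
forms singular at all the points has codimension at most `N(n−1)+d+1` in `V_{d,n}`, and in
particular at most `N(n+1)−1`. (Codimension bounds are stated additively to avoid truncated
subtraction: `codim W ≤ c` reads `binom(d+n,n) ≤ dim W + c`.) -/
theorem codim_singular_subspace_of_collinear (n N d : ℕ) (hn : 1 ≤ n) (hN : 2 ≤ N)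
    (hd1 : 1 ≤ d) (hd2 : d ≤ 2 * N - 2)
    (p : Fin N → (Fin (n+1) → ℂ)) (hp0 : ∀ j, p j ≠ 0)
    (hpdist : ∀ j j', j ≠ j' → ∀ c : ℂ, p j ≠ c • p j')
    (hcol : ∃ P : Submodule ℂ (Fin (n+1) → ℂ), Module.finrank ℂ P = 2 ∧ ∀ j, p j ∈ P) :
    Nat.choose (d+n) n ≤ Module.finrank ℂ (Wsub n d N p) + (N * (n-1) + d + 1) ∧
      Nat.choose (d+n) n + 1 ≤ Module.finrank ℂ (Wsub n d N p) + N * (n+1) :=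
  codim_singular_subspace_of_collinear_general n N d hN hd2 p hcol
end

section
/- Let n ≥ 1, N ≥ 1, and let p_1,…,p_N ∈ ℂ^{n+1} be nonzero, pairwise non-proportional vectors. Let I ⊆ ℂ[x_0,…,x_n] be the ideal of all polynomials vanishing at every scalar multiple of each p_j (the homogeneous vanishing ideal of the N corresponding points of ℙ^n). Then for every d ≥ 2N−1, the intersection I² ∩ V_{d,n} (the degree-d graded piece of the ideal I²) is a linear subspace of codimension exactly N(n+1) in V_{d,n}; equivalently, the degree-d graded piece of the quotient ring ℂ[x_0,…,x_n]/I² has complex dimension N(n+1). -/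
open MvPolynomial

/-- The homogeneous vanishing ideal of the `N` points `[p 0], …, [p (N-1)]` of `ℙⁿ`:
all polynomials vanishing at every scalar multiple of every `p j`. -/
noncomputable def vanishingIdealPoints {n N : ℕ} (p : Fin N → (Fin (n+1) → ℂ)) :
    Ideal (MvPolynomial (Fin (n+1)) ℂ) where
  carrier := {g | ∀ j, ∀ t : ℂ, MvPolynomial.eval (t • p j) g = 0}
  zero_mem' := by intro j t; simp
  add_mem' := by intro a b ha hb j t; simp [map_add, ha j t, hb j t]
  smul_mem' := by intro c g hg j t; simp [smul_eq_mul, map_mul, hg j t]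

/-!
Choose a linear form `m` vanishing at none of the points and, for each `k`, a product `F_k` of
`N - 1` linear forms vanishing at the other points but not at `p_k`. The forms
`F_k² m^(d+1-2N) ℓ`, `ℓ` linear, span a space `T` of dimension `N(n+1)` meeting `I²` only in `0`:
an element of `I²` vanishes with all its first derivatives at every `p_k`, which forces each `ℓ`
to be `0`. It remains to see that `V_d ⊆ I² + T` for `d ≥ 2N - 1`, by induction on the number of
points. When a point `p_j` is added, any product `ℓ ℓ' g` with `ℓ, ℓ'` vanishing at `p_j` lies in
`I² + T` by the induction hypothesis applied to `g`. Modulo such products every form of degree `d`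
is some `m^(d-1) ℓ`, and these are reached from the `j`-th block `F_j² m^(d+1-2N) ℓ` by trading
the factors of `F_j` for powers of `m` one at a time.
-/

open Finset

lemma exists_dotProduct_eq_zero_and_ne_zero {K σ : Type*} [Field K] [Fintype σ] {x y : σ → K}
    (h : ∀ c : K, x ≠ c • y) : ∃ w : σ → K, w ⬝ᵥ y = 0 ∧ w ⬝ᵥ x ≠ 0 := by
  classical
  have hx : x ∉ K ∙ y := fun hx => by
    obtain ⟨c, hc⟩ := Submodule.mem_span_singleton.1 hx
    exact h c hc.symm
  obtain ⟨f, hfx, hfy⟩ := Submodule.exists_dual_map_eq_bot_of_notMem hx inferInstance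
  have hw : ∀ z, (fun i => f fun j => if i = j then 1 else 0) ⬝ᵥ z = f z := fun z => by
    simp [dotProduct, f.pi_apply_eq_sum_univ z, mul_comm]
  refine ⟨_, ?_, by rwa [hw]⟩
  rw [hw, ← Submodule.mem_bot K, ← hfy]
  exact Submodule.mem_map_of_mem (Submodule.mem_span_singleton_self _)

namespace MvPolynomial

variable {K σ ι : Type*} [Field K]

section LinearForm

variable [Fintype σ]

noncomputable abbrev linearForm : (σ → K) →ₗ[K] MvPolynomial σ K :=
  Fintype.linearCombination K X

@[simp]
lemma eval_linearForm (x w : σ → K) : eval x (linearForm w) = w ⬝ᵥ x := by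
  simp [Fintype.linearCombination_apply, dotProduct, smul_eq_C_mul]

lemma range_linearForm : LinearMap.range linearForm = homogeneousSubmodule σ K 1 := by
  rw [Fintype.range_linearCombination, homogeneousSubmodule_one_eq_span_X]

lemma isHomogeneous_linearForm (w : σ → K) : (linearForm w).IsHomogeneous 1 := by
  rw [← mem_homogeneousSubmodule, ← range_linearForm]
  exact LinearMap.mem_range_self _ w

@[simp]
lemma pderiv_linearForm [DecidableEq σ] (i : σ) (w : σ → K) :
    pderiv i (linearForm w) = C (w i) := by
  simp [Fintype.linearCombination_apply, pderiv_X, Pi.single_apply, smul_eq_C_mul]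

lemma linearForm_injective : Function.Injective (linearForm : (σ → K) →ₗ[K] MvPolynomial σ K) := by
  classical
  intro v w h
  funext i
  simpa using congrArg (pderiv i) h

lemma exists_forall_dotProduct_ne_zero [Infinite K] [Fintype ι] {p : ι → σ → K}
    (hp0 : ∀ j, p j ≠ 0) : ∃ w : σ → K, ∀ j, w ⬝ᵥ p j ≠ 0 := by
  have hprod : ∏ j, linearForm (p j) ≠ 0 := prod_ne_zero_iff.2 fun j _ h =>
    hp0 j (linearForm_injective (h.trans (map_zero _).symm))
  obtain ⟨x, hx⟩ : ∃ x, eval x (∏ j, linearForm (p j)) ≠ 0 := by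
    by_contra! h
    exact hprod (MvPolynomial.funext fun x => by simp [h x])
  rw [map_prod] at hx
  exact ⟨x, fun j => by simpa [dotProduct_comm] using prod_ne_zero_iff.1 hx j (mem_univ j)⟩

lemma exists_linearForm_eq_C_mul_add {u q : σ → K} (hu : u ⬝ᵥ q ≠ 0) (w : σ → K) :
    ∃ (c : K) (v : σ → K), v ⬝ᵥ q = 0 ∧
      linearForm w = C c * linearForm u + linearForm v := by
  refine ⟨w ⬝ᵥ q / u ⬝ᵥ q, w - (w ⬝ᵥ q / u ⬝ᵥ q) • u, ?_, ?_⟩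
  · rw [sub_dotProduct, smul_dotProduct, smul_eq_mul, div_mul_cancel₀ _ hu, sub_self]
  · rw [map_sub, map_smul, smul_eq_C_mul]; ring

end LinearForm

variable (K) in
def coneIdeal (p : ι → σ → K) (A : Finset ι) : Ideal (MvPolynomial σ K) :=
  vanishingIdeal K {x | ∃ j ∈ A, ∃ t : K, t • p j = x}

lemma mem_coneIdeal {p : ι → σ → K} {A : Finset ι} {f : MvPolynomial σ K} :
    f ∈ coneIdeal K p A ↔ ∀ j ∈ A, ∀ t : K, eval (t • p j) f = 0 := by
  simp only [coneIdeal, mem_vanishingIdeal_iff]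
  exact ⟨fun h j hj t => h _ ⟨j, hj, t, rfl⟩, fun h _ ⟨j, hj, t, ht⟩ => ht ▸ h j hj t⟩

lemma coneIdeal_empty (p : ι → σ → K) : coneIdeal K p ∅ = ⊤ := by
  simp [coneIdeal, vanishingIdeal_empty]

lemma coneIdeal_mul_le [DecidableEq ι] {p : ι → σ → K} {A B C : Finset ι} (h : A ⊆ B ∪ C) :
    coneIdeal K p B * coneIdeal K p C ≤ coneIdeal K p A := by
  refine Ideal.mul_le.2 fun f hf g hg => mem_coneIdeal.2 fun j hj t => ?_
  rcases mem_union.1 (h hj) with hjB | hjC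
  · simp [mem_coneIdeal.1 hf j hjB t]
  · simp [mem_coneIdeal.1 hg j hjC t]

lemma linearForm_mem_coneIdeal [Fintype σ] {p : ι → σ → K} {A : Finset ι} {w : σ → K}
    (hw : ∀ j ∈ A, w ⬝ᵥ p j = 0) : linearForm w ∈ coneIdeal K p A :=
  mem_coneIdeal.2 fun j hj t => by simp [dotProduct_smul, hw j hj]

variable (K) in
def doubleVanishingIdeal (x : σ → K) : Ideal (MvPolynomial σ K) where
  carrier := {f | eval x f = 0 ∧ ∀ i, eval x (pderiv i f) = 0}
  zero_mem' := by simp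
  add_mem' := by
    rintro f g ⟨hf, hf'⟩ ⟨hg, hg'⟩
    exact ⟨by simp [hf, hg], fun i => by simp [hf' i, hg' i]⟩
  smul_mem' := by
    rintro c f ⟨hf, hf'⟩
    exact ⟨by simp [hf], fun i => by simp [hf, hf' i]⟩

lemma mul_mem_doubleVanishingIdeal {x : σ → K} {f g : MvPolynomial σ K}
    (hf : eval x f = 0) (hg : eval x g = 0) : f * g ∈ doubleVanishingIdeal K x :=
  ⟨by simp [hf], fun i => by simp [hf, hg]⟩

lemma sq_coneIdeal_le {p : ι → σ → K} {A : Finset ι} {j : ι} (hj : j ∈ A) :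
    coneIdeal K p A ^ 2 ≤ doubleVanishingIdeal K (p j) := by
  rw [pow_two, Ideal.mul_le]
  intro f hf g hg
  exact mul_mem_doubleVanishingIdeal (by simpa using mem_coneIdeal.1 hf j hj 1)
    (by simpa using mem_coneIdeal.1 hg j hj 1)

lemma eq_zero_of_mul_linearForm_mem [Fintype σ] {x w : σ → K} {Q : MvPolynomial σ K}
    (hQ : eval x Q ≠ 0) (h : Q * linearForm w ∈ doubleVanishingIdeal K x) : w = 0 := by
  classical
  obtain ⟨h₀, h₁⟩ := h
  have hwx : w ⬝ᵥ x = 0 := by simpa [hQ] using h₀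
  funext i
  simpa [hwx, hQ] using h₁ i

lemma finrank_homogeneousSubmodule_s8 [Fintype σ] (D : ℕ) :
    Module.finrank K (homogeneousSubmodule σ K D) = (Fintype.card σ + D - 1).choose D := by
  classical
  have hsupp : {s : σ →₀ ℕ | s.degree = D} = ↑((univ : Finset σ).finsuppAntidiag D) := by
    ext s
    simp [mem_finsuppAntidiag, Finsupp.degree_eq_sum]
  rw [← card_univ, ← card_finsuppAntidiag_nat_eq_choose,
    homogeneousSubmodule_eq_finsupp_supported, hsupp]
  exact (Module.finrank_eq_card_basis (basisRestrictSupport K _)).trans (by simp)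

instance [Finite σ] (D : ℕ) : Module.Finite K (homogeneousSubmodule σ K D) :=
  Module.Finite.iff_fg.2 (homogeneousSubmodule_fg σ K D)

section Generation

variable {𝒮 : Submodule K (MvPolynomial σ K)}

lemma C_mul_mem (c : K) {f : MvPolynomial σ K} (hf : f ∈ 𝒮) : C c * f ∈ 𝒮 := by
  simpa [smul_eq_C_mul] using 𝒮.smul_mem c hf

lemma C_mul_mem_iff {c : K} (hc : c ≠ 0) {f : MvPolynomial σ K} : C c * f ∈ 𝒮 ↔ f ∈ 𝒮 := by
  rw [← smul_eq_C_mul, Submodule.smul_mem_iff _ hc]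

lemma mul_mem_sq_sup {I : Ideal (MvPolynomial σ K)} {f g : MvPolynomial σ K} (hf : f ∈ I)
    (hg : g ∈ I) (T : Submodule K (MvPolynomial σ K)) : f * g ∈ (I ^ 2).restrictScalars K ⊔ T :=
  Submodule.mem_sup_left (pow_two I ▸ Ideal.mul_mem_mul hf hg)

variable [Fintype σ]

lemma homogeneousSubmodule_succ_le {r : ℕ}
    (h : ∀ w, ∀ g ∈ homogeneousSubmodule σ K r, linearForm w * g ∈ 𝒮) :
    homogeneousSubmodule σ K (r + 1) ≤ 𝒮 := by
  rw [← homogeneousSubmodule_one_pow, pow_succ', homogeneousSubmodule_one_pow,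
    ← range_linearForm, Submodule.mul_le]
  rintro _ ⟨w, rfl⟩ g hg
  exact h w g hg

variable {q m : σ → K} {D : ℕ}

lemma homogeneousSubmodule_le_of_pow_mul_linearForm_mem (hm : m ⬝ᵥ q ≠ 0) {d : ℕ}
    (hquad : ∀ v v', v ⬝ᵥ q = 0 → v' ⬝ᵥ q = 0 → ∀ e (g : MvPolynomial σ K), g.IsHomogeneous e →
      e + 2 = d + 1 → linearForm v * linearForm v' * g ∈ 𝒮)
    (hpow : ∀ w, linearForm m ^ d * linearForm w ∈ 𝒮) :
    homogeneousSubmodule σ K (d + 1) ≤ 𝒮 := by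
  suffices ∀ r, (∀ s, r + s = d + 1 → ∀ g ∈ homogeneousSubmodule σ K r,
      linearForm m ^ s * g ∈ 𝒮) ∧ (∀ s, r + s = d → ∀ g ∈ homogeneousSubmodule σ K r,
      ∀ v, v ⬝ᵥ q = 0 → linearForm v * linearForm m ^ s * g ∈ 𝒮) from
    fun g hg => by simpa using (this (d + 1)).1 0 (add_zero _) g hg
  intro r
  induction r with
  | zero =>
    simp only [homogeneousSubmodule_zero, Submodule.mem_one, zero_add]
    refine ⟨?_, ?_⟩ <;> rintro s rfl _ ⟨c, rfl⟩
    · simpa [pow_succ, ← smul_eq_C_mul, algebraMap_eq, mul_comm] using C_mul_mem c (hpow m)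
    · intro v _
      simpa [algebraMap_eq, mul_comm, mul_left_comm] using C_mul_mem c (hpow v)
  | succ r ih =>
    refine ⟨fun s hs => ?_, fun s hs => ?_⟩
    · refine homogeneousSubmodule_succ_le (𝒮 := 𝒮.comap (LinearMap.mulLeft K _)) fun w g hg => ?_
      obtain ⟨c, v, hv, hw⟩ := exists_linearForm_eq_C_mul_add hm w
      rw [Submodule.mem_comap, LinearMap.mulLeft_apply, hw,
        show linearForm m ^ s * ((C c * linearForm m + linearForm v) * g) =
          C c * (linearForm m ^ (s + 1) * g) + linearForm v * linearForm m ^ s * g by ring]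
      exact add_mem (C_mul_mem c ((ih.1 (s + 1) (by omega) g hg))) (ih.2 s (by omega) g hg v hv)
    · intro g hg v hv
      refine homogeneousSubmodule_succ_le
        (𝒮 := 𝒮.comap (LinearMap.mulLeft K (linearForm v * _))) (fun w g hg => ?_) hg
      obtain ⟨c, v', hv', hw⟩ := exists_linearForm_eq_C_mul_add hm w
      rw [Submodule.mem_comap, LinearMap.mulLeft_apply, hw,
        show linearForm v * linearForm m ^ s * ((C c * linearForm m + linearForm v') * g) =
          C c * (linearForm v * linearForm m ^ (s + 1) * g) +
            linearForm v * linearForm v' * (linearForm m ^ s * g) by ring]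
      exact add_mem (C_mul_mem c (ih.2 (s + 1) (by omega) g hg v hv))
        (hquad v v' hv hv' (1 * s + r) _ (((isHomogeneous_linearForm m).pow s).mul hg) (by omega))

lemma sq_mul_pow_mul_linearForm_mem_of_sq_mul {u : σ → K} (hu : u ⬝ᵥ q ≠ 0) (hm : m ⬝ᵥ q ≠ 0)
    (hquad : ∀ v v', v ⬝ᵥ q = 0 → v' ⬝ᵥ q = 0 → ∀ e (g : MvPolynomial σ K), g.IsHomogeneous e →
      e + 2 = D → linearForm v * linearForm v' * g ∈ 𝒮)
    {P : MvPolynomial σ K} {r s : ℕ} (hP : P.IsHomogeneous r) (hD : 2 * r + s + 3 = D)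
    (h : ∀ w, (linearForm u * P) ^ 2 * linearForm m ^ s * linearForm w ∈ 𝒮) (w : σ → K) :
    P ^ 2 * linearForm m ^ (s + 2) * linearForm w ∈ 𝒮 := by
  obtain ⟨a, γ, hγ, hua⟩ := exists_linearForm_eq_C_mul_add hm u
  have ha : a ≠ 0 := fun ha => hu (by simpa [ha, hγ] using congrArg (eval q) hua)
  have hPm : ∀ t, (P ^ 2 * linearForm m ^ t).IsHomogeneous (r * 2 + 1 * t) := fun t =>
    (hP.pow 2).mul ((isHomogeneous_linearForm m).pow t)
  -- expanding `u = a m + γ` in the hypothesis leaves `2 a γ P² m^(s+1) w` modulo quadrics at `q`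
  have hred : ∀ w, linearForm γ * (P ^ 2 * linearForm m ^ (s + 1) * linearForm w) ∈ 𝒮 →
      P ^ 2 * linearForm m ^ (s + 2) * linearForm w ∈ 𝒮 := by
    intro w hw
    rw [← C_mul_mem_iff (pow_ne_zero 2 ha)]
    have := sub_mem (sub_mem (h w) (C_mul_mem (2 * a) hw))
      (hquad γ γ hγ hγ _ _ ((hPm s).mul (isHomogeneous_linearForm w)) (by omega))
    convert this using 1
    rw [hua, C_mul, C_pow, map_ofNat]
    ring
  have hγm : P ^ 2 * linearForm m ^ (s + 2) * linearForm γ ∈ 𝒮 := by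
    refine hred γ ?_
    convert hquad γ γ hγ hγ _ _ (hPm (s + 1)) (by omega) using 1
    ring
  obtain ⟨b, v, hv, hw⟩ := exists_linearForm_eq_C_mul_add hm w
  refine hred w ?_
  rw [hw, show linearForm γ * (P ^ 2 * linearForm m ^ (s + 1) * (C b * linearForm m + linearForm v))
    = C b * (P ^ 2 * linearForm m ^ (s + 2) * linearForm γ) +
      linearForm γ * linearForm v * (P ^ 2 * linearForm m ^ (s + 1)) by ring]
  exact add_mem (C_mul_mem b hγm) (hquad γ v hγ hv _ _ (hPm (s + 1)) (by omega))

lemma sq_mul_pow_mul_linearForm_mem_of_prod [DecidableEq ι] {u : ι → σ → K}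
    {B : Finset ι} (hu : ∀ k ∈ B, u k ⬝ᵥ q ≠ 0) (hm : m ⬝ᵥ q ≠ 0)
    (hquad : ∀ v v', v ⬝ᵥ q = 0 → v' ⬝ᵥ q = 0 → ∀ e (g : MvPolynomial σ K), g.IsHomogeneous e →
      e + 2 = D → linearForm v * linearForm v' * g ∈ 𝒮)
    {P : MvPolynomial σ K} {r s : ℕ} (hP : P.IsHomogeneous r) (hD : 2 * (#B + r) + s + 1 = D)
    (h : ∀ w, ((∏ k ∈ B, linearForm (u k)) * P) ^ 2 * linearForm m ^ s * linearForm w ∈ 𝒮)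
    (w : σ → K) : P ^ 2 * linearForm m ^ (s + 2 * #B) * linearForm w ∈ 𝒮 := by
  induction B using Finset.induction_on generalizing P r w with
  | empty => simpa using h w
  | insert k B hk ih =>
    rw [card_insert_of_notMem hk] at hD
    rw [card_insert_of_notMem hk, show s + 2 * (#B + 1) = s + 2 * #B + 2 by ring]
    refine sq_mul_pow_mul_linearForm_mem_of_sq_mul (hu k (mem_insert_self k B)) hm hquad hP
      (by omega) (fun w => ?_) w
    refine ih (fun k hk => hu k (mem_insert_of_mem hk))
      ((isHomogeneous_linearForm _).mul hP) (by omega) (fun w => ?_) w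
    simpa [prod_insert hk, mul_assoc, mul_left_comm] using h w

end Generation

variable [Fintype σ]

structure SeparatingForms (p : ι → σ → K) where
  sep : ι → ι → σ → K
  sep_dotProduct_of_ne : ∀ ⦃j k⦄, j ≠ k → sep j k ⬝ᵥ p k = 0
  sep_dotProduct_self_ne_zero : ∀ ⦃j k⦄, j ≠ k → sep j k ⬝ᵥ p j ≠ 0
  base : σ → K
  base_dotProduct_ne_zero : ∀ j, base ⬝ᵥ p j ≠ 0

namespace SeparatingForms

variable [DecidableEq ι] {p : ι → σ → K} (s : SeparatingForms p)

noncomputable def separatorProd (A : Finset ι) (k : ι) : MvPolynomial σ K :=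
  ∏ k' ∈ A.erase k, linearForm (s.sep k k')

/-- The exponent is a truncated subtraction; it is only meaningful when `2 #A ≤ D + 1`, where
`hermite A D k * linearForm w` is homogeneous of degree `D`. -/
noncomputable def hermite (A : Finset ι) (D : ℕ) (k : ι) : MvPolynomial σ K :=
  s.separatorProd A k ^ 2 * linearForm s.base ^ (D + 1 - 2 * #A)

noncomputable def hermiteMap (A : Finset ι) (D : ℕ) : (ι → σ → K) →ₗ[K] MvPolynomial σ K :=
  ∑ k ∈ A, LinearMap.mulLeft K (s.hermite A D k) ∘ₗ linearForm ∘ₗ LinearMap.proj k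

noncomputable def hermiteSpace (A : Finset ι) (D : ℕ) : Submodule K (MvPolynomial σ K) :=
  LinearMap.range (s.hermiteMap A D)

variable {s} {A : Finset ι} {D : ℕ}

lemma hermiteMap_apply (W : ι → σ → K) :
    s.hermiteMap A D W = ∑ k ∈ A, s.hermite A D k * linearForm (W k) := by
  simp [hermiteMap, LinearMap.sum_apply]

lemma hermite_mul_linearForm_mem {k : ι} (hk : k ∈ A) (w : σ → K) :
    s.hermite A D k * linearForm w ∈ s.hermiteSpace A D := by
  refine ⟨Pi.single k w, ?_⟩
  rw [hermiteMap_apply, sum_eq_single_of_mem k hk fun k' _ hk' => by simp [hk']]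
  simp

lemma isHomogeneous_separatorProd (k : ι) : (s.separatorProd A k).IsHomogeneous #(A.erase k) := by
  simpa [separatorProd] using
    IsHomogeneous.prod _ _ (fun _ => 1) fun k' _ => isHomogeneous_linearForm (s.sep k k')

lemma hermiteSpace_le (hA : 2 * #A ≤ D + 1) : s.hermiteSpace A D ≤ homogeneousSubmodule σ K D := by
  rintro _ ⟨W, rfl⟩
  rw [hermiteMap_apply]
  refine Submodule.sum_mem _ fun k hk => ?_
  have hcard : #(A.erase k) + 1 = #A := card_erase_add_one hk
  rw [mem_homogeneousSubmodule, hermite]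
  convert (((isHomogeneous_separatorProd (s := s) (A := A) k).pow 2).mul
    ((isHomogeneous_linearForm s.base).pow _)).mul (isHomogeneous_linearForm (W k)) using 1
  omega

lemma separatorProd_mem_coneIdeal (k : ι) : s.separatorProd A k ∈ coneIdeal K p (A.erase k) := by
  refine mem_coneIdeal.2 fun k' hk' t => ?_
  rw [separatorProd, map_prod]
  exact prod_eq_zero hk' (by
    simp [dotProduct_smul, s.sep_dotProduct_of_ne (ne_of_mem_erase hk').symm])

lemma eval_separatorProd_ne_zero (k : ι) : eval (p k) (s.separatorProd A k) ≠ 0 := by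
  rw [separatorProd, map_prod]
  exact prod_ne_zero_iff.2 fun k' hk' => by
    simpa using s.sep_dotProduct_self_ne_zero (ne_of_mem_erase hk').symm

lemma hermite_mem_doubleVanishingIdeal {k k' : ι} (hk : k ∈ A) (hk' : k' ≠ k) :
    s.hermite A D k' ∈ doubleVanishingIdeal K (p k) := by
  have hvan : eval (p k) (linearForm (s.sep k' k)) = 0 := by
    simpa using s.sep_dotProduct_of_ne hk'
  rw [hermite, separatorProd, ← mul_prod_erase _ _ (mem_erase.2 ⟨hk'.symm, hk⟩)]
  exact Ideal.mul_mem_right _ _ (by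
    rw [mul_pow, pow_two]
    exact Ideal.mul_mem_right _ _ (mul_mem_doubleVanishingIdeal hvan hvan))

lemma eq_zero_of_hermiteMap_mem {W : ι → σ → K}
    (hW : ∀ k ∈ A, s.hermiteMap A D W ∈ doubleVanishingIdeal K (p k)) : ∀ k ∈ A, W k = 0 := by
  intro k hk
  have hQ : eval (p k) (s.hermite A D k) ≠ 0 := by
    rw [hermite, map_mul, map_pow, map_pow, eval_linearForm]
    exact mul_ne_zero (pow_ne_zero _ (eval_separatorProd_ne_zero k))
      (pow_ne_zero _ (s.base_dotProduct_ne_zero k))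
  refine eq_zero_of_mul_linearForm_mem hQ ?_
  have hrest : ∑ k' ∈ A.erase k, s.hermite A D k' * linearForm (W k') ∈
      doubleVanishingIdeal K (p k) :=
    Ideal.sum_mem _ fun k' hk' =>
      Ideal.mul_mem_right _ _ (hermite_mem_doubleVanishingIdeal hk (ne_of_mem_erase hk'))
  have := hW k hk
  rwa [hermiteMap_apply, ← add_sum_erase _ _ hk, Ideal.add_mem_iff_left _ hrest] at this

lemma separatorProd_insert {j k : ι} {A₀ : Finset ι} (hjk : j ≠ k) (hj : j ∉ A₀) :
    s.separatorProd (insert j A₀) k = linearForm (s.sep k j) * s.separatorProd A₀ k := by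
  rw [separatorProd, erase_insert_of_ne hjk, prod_insert (fun h => hj (mem_of_mem_erase h)),
    separatorProd]

lemma hermite_insert {j k : ι} {A₀ : Finset ι} (hjk : j ≠ k) (hj : j ∉ A₀) {e : ℕ}
    (he : e + 2 = D) :
    s.hermite (insert j A₀) D k = linearForm (s.sep k j) ^ 2 * s.hermite A₀ e k := by
  rw [hermite, hermite, separatorProd_insert hjk hj, card_insert_of_notMem hj,
    show D + 1 - 2 * (#A₀ + 1) = e + 1 - 2 * #A₀ by omega]
  ring

lemma mul_separatorProd_mem_coneIdeal {j k : ι} {A₀ : Finset ι} {g : MvPolynomial σ K}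
    (hg : g ∈ coneIdeal K p {j, k}) : g * s.separatorProd A₀ k ∈ coneIdeal K p (insert j A₀) :=
  coneIdeal_mul_le (fun l hl => by grind) (Ideal.mul_mem_mul hg (separatorProd_mem_coneIdeal k))

lemma mul_sep_mul_hermite_mem {j k : ι} {A₀ : Finset ι} (hj : j ∉ A₀) (hk : k ∈ A₀) {e : ℕ}
    (he : e + 2 = D) {δ : σ → K} (hδj : δ ⬝ᵥ p j = 0) (hδk : δ ⬝ᵥ p k = 0) (x : σ → K) :
    linearForm δ * linearForm (s.sep k j) * (s.hermite A₀ e k * linearForm x) ∈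
      (coneIdeal K p (insert j A₀) ^ 2).restrictScalars K ⊔ s.hermiteSpace (insert j A₀) D := by
  have hjk : j ≠ k := fun h => hj (h ▸ hk)
  obtain ⟨c, ρ, hρ, hx⟩ :=
    exists_linearForm_eq_C_mul_add (s.sep_dotProduct_self_ne_zero hjk.symm) x
  have hT := hermite_mul_linearForm_mem (s := s) (A := insert j A₀) (D := D)
    (mem_insert_of_mem hk) δ
  rw [hermite_insert hjk hj he] at hT
  rw [hx, hermite, show ∀ F M : MvPolynomial σ K, linearForm δ * linearForm (s.sep k j) *
      (F ^ 2 * M * (C c * linearForm (s.sep k j) + linearForm ρ)) =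
    C c * (linearForm (s.sep k j) ^ 2 * (F ^ 2 * M) * linearForm δ) +
      linearForm δ * F * (linearForm (s.sep k j) * linearForm ρ * F * M) from fun _ _ => by ring]
  refine add_mem (C_mul_mem c (Submodule.mem_sup_right hT)) (mul_mem_sq_sup ?_ ?_ _)
  · exact mul_separatorProd_mem_coneIdeal (linearForm_mem_coneIdeal (by simp [hδj, hδk]))
  · refine Ideal.mul_mem_right _ _ (mul_separatorProd_mem_coneIdeal ?_)
    exact coneIdeal_mul_le (fun l hl => by grind) (Ideal.mul_mem_mul
      (linearForm_mem_coneIdeal (A := {j}) (by simpa using s.sep_dotProduct_of_ne hjk.symm))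
      (linearForm_mem_coneIdeal (A := {k}) (by simpa using hρ)))

/-- Splitting `β = c v + δ` with `v = sep k j` and `δ` vanishing at `p j` and `p k`, the `v²` term
is a Hermite form for `A₀ ∪ {j}`, the `δ²` term lies in the square of the ideal, and the mixed
terms are handled by `mul_sep_mul_hermite_mem`. -/
lemma mul_mul_hermite_mem {j k : ι} {A₀ : Finset ι} (hj : j ∉ A₀) (hk : k ∈ A₀) {e : ℕ}
    (he : e + 2 = D) {β β' : σ → K} (hβ : β ⬝ᵥ p j = 0) (hβ' : β' ⬝ᵥ p j = 0) (w : σ → K) :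
    linearForm β * linearForm β' * (s.hermite A₀ e k * linearForm w) ∈
      (coneIdeal K p (insert j A₀) ^ 2).restrictScalars K ⊔ s.hermiteSpace (insert j A₀) D := by
  have hjk : j ≠ k := fun h => hj (h ▸ hk)
  set v := s.sep k j
  have hvj : v ⬝ᵥ p j = 0 := s.sep_dotProduct_of_ne hjk.symm
  have hvk : v ⬝ᵥ p k ≠ 0 := s.sep_dotProduct_self_ne_zero hjk.symm
  have hT := hermite_mul_linearForm_mem (s := s) (A := insert j A₀) (D := D)
    (mem_insert_of_mem hk) w
  rw [hermite_insert hjk hj he] at hT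
  obtain ⟨c₁, δ₁, hδ₁k, hβ₁⟩ := exists_linearForm_eq_C_mul_add hvk β
  obtain ⟨c₂, δ₂, hδ₂k, hβ₂⟩ := exists_linearForm_eq_C_mul_add hvk β'
  have hδ₁j : δ₁ ⬝ᵥ p j = 0 := by simpa [hβ, hvj, eq_comm] using congrArg (eval (p j)) hβ₁
  have hδ₂j : δ₂ ⬝ᵥ p j = 0 := by simpa [hβ', hvj, eq_comm] using congrArg (eval (p j)) hβ₂
  rw [hermite, hβ₁, hβ₂, show ∀ F M : MvPolynomial σ K, (C c₁ * linearForm v + linearForm δ₁) *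
      (C c₂ * linearForm v + linearForm δ₂) * (F ^ 2 * M * linearForm w) =
    C (c₁ * c₂) * (linearForm v ^ 2 * (F ^ 2 * M) * linearForm w) +
      C c₂ * (linearForm δ₁ * linearForm v * (F ^ 2 * M * linearForm w)) +
      C c₁ * (linearForm δ₂ * linearForm v * (F ^ 2 * M * linearForm w)) +
      linearForm δ₁ * F * (linearForm δ₂ * F * M * linearForm w) from fun _ _ => by
        rw [C_mul]; ring]
  refine add_mem (add_mem (add_mem (C_mul_mem _ (Submodule.mem_sup_right hT)) ?_) ?_)
    (mul_mem_sq_sup ?_ ?_ _)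
  · exact C_mul_mem _ (by simpa [hermite] using mul_sep_mul_hermite_mem hj hk he hδ₁j hδ₁k w)
  · exact C_mul_mem _ (by simpa [hermite] using mul_sep_mul_hermite_mem hj hk he hδ₂j hδ₂k w)
  · exact mul_separatorProd_mem_coneIdeal (linearForm_mem_coneIdeal (by simp [hδ₁j, hδ₁k]))
  · exact Ideal.mul_mem_right _ _ (Ideal.mul_mem_right _ _
      (mul_separatorProd_mem_coneIdeal (linearForm_mem_coneIdeal (by simp [hδ₂j, hδ₂k]))))

lemma mul_mul_mem_of_le {j : ι} {A₀ : Finset ι} (hj : j ∉ A₀) {e : ℕ} (he : e + 2 = D)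
    (hle : homogeneousSubmodule σ K e ≤
      (coneIdeal K p A₀ ^ 2).restrictScalars K ⊔ s.hermiteSpace A₀ e)
    {β β' : σ → K} (hβ : β ⬝ᵥ p j = 0) (hβ' : β' ⬝ᵥ p j = 0) {g : MvPolynomial σ K}
    (hg : g.IsHomogeneous e) :
    linearForm β * linearForm β' * g ∈
      (coneIdeal K p (insert j A₀) ^ 2).restrictScalars K ⊔ s.hermiteSpace (insert j A₀) D := by
  obtain ⟨y, hy, _, ⟨W, rfl⟩, rfl⟩ := Submodule.mem_sup.1 (hle hg)
  rw [mul_add]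
  refine add_mem (Submodule.mem_sup_left ?_) ?_
  · have hmul : coneIdeal K p {j} * coneIdeal K p A₀ ≤ coneIdeal K p (insert j A₀) :=
      coneIdeal_mul_le (fun l hl => by grind)
    have hmem := Ideal.mul_mem_mul (Ideal.mul_mem_mul
      (linearForm_mem_coneIdeal (A := {j}) (by simpa using hβ))
      (linearForm_mem_coneIdeal (A := {j}) (by simpa using hβ'))) hy
    rw [show coneIdeal K p {j} * coneIdeal K p {j} * coneIdeal K p A₀ ^ 2 =
      (coneIdeal K p {j} * coneIdeal K p A₀) ^ 2 by ring] at hmem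
    exact Ideal.pow_right_mono hmul 2 hmem
  · rw [hermiteMap_apply, mul_sum]
    exact sum_mem fun k hk => mul_mul_hermite_mem hj hk he hβ hβ' (W k)

theorem homogeneousSubmodule_le_sq_coneIdeal_sup_hermiteSpace (A : Finset ι)
    (hA : 2 * #A ≤ D + 1) :
    homogeneousSubmodule σ K D ≤ (coneIdeal K p A ^ 2).restrictScalars K ⊔ s.hermiteSpace A D := by
  induction A using Finset.induction_on generalizing D with
  | empty => simp [coneIdeal_empty, Ideal.top_pow]
  | insert j A₀ hj ih =>
    rw [card_insert_of_notMem hj] at hA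
    obtain ⟨d, rfl⟩ : ∃ d, D = d + 1 := ⟨D - 1, by omega⟩
    have hquad := fun β β' (hβ : β ⬝ᵥ p j = 0) (hβ' : β' ⬝ᵥ p j = 0) e
      (g : MvPolynomial σ K) (hg : g.IsHomogeneous e) (he : e + 2 = d + 1) =>
      mul_mul_mem_of_le hj he (ih (by omega)) hβ hβ' hg
    refine homogeneousSubmodule_le_of_pow_mul_linearForm_mem (s.base_dotProduct_ne_zero j) hquad
      fun w => ?_
    have := sq_mul_pow_mul_linearForm_mem_of_prod (u := s.sep j) (B := A₀)
      (fun k hk => s.sep_dotProduct_self_ne_zero fun h => hj (h ▸ hk))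
      (s.base_dotProduct_ne_zero j) hquad (P := 1) (s := d - 2 * #A₀) (isHomogeneous_one σ K)
      (by omega) (fun w => Submodule.mem_sup_right ?_) w
    · rwa [one_pow, one_mul, show d - 2 * #A₀ + 2 * #A₀ = d by omega] at this
    · convert hermite_mul_linearForm_mem (s := s) (D := d + 1) (mem_insert_self j A₀) w using 2
      rw [hermite, separatorProd, erase_insert hj, card_insert_of_notMem hj, mul_one,
        show d + 1 + 1 - 2 * (#A₀ + 1) = d - 2 * #A₀ by omega]

lemma hermiteMap_univ_injective [Fintype ι] : Function.Injective (s.hermiteMap univ D) :=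
  (injective_iff_map_eq_zero _).2 fun _ hW => _root_.funext fun k =>
    eq_zero_of_hermiteMap_mem (fun _ _ => hW ▸ zero_mem _) k (mem_univ k)

lemma finrank_hermiteSpace_univ [Fintype ι] :
    Module.finrank K (s.hermiteSpace univ D) = Fintype.card ι * Fintype.card σ := by
  rw [hermiteSpace, LinearMap.finrank_range_of_inj hermiteMap_univ_injective]
  simp [Module.finrank_pi_fintype]

lemma sq_coneIdeal_inf_hermiteSpace_univ_eq_bot [Fintype ι] :
    (coneIdeal K p univ ^ 2).restrictScalars K ⊓ s.hermiteSpace univ D = ⊥ := by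
  rw [eq_bot_iff]
  rintro _ ⟨hx, W, rfl⟩
  have hW := eq_zero_of_hermiteMap_mem fun k _ => sq_coneIdeal_le (mem_univ k) hx
  simp [show W = 0 from _root_.funext fun k => hW k (mem_univ k)]

end SeparatingForms

lemma SeparatingForms.nonempty [Infinite K] [Fintype ι] {p : ι → σ → K}
    (hp0 : ∀ j, p j ≠ 0) (hpdist : ∀ j k, j ≠ k → ∀ c : K, p j ≠ c • p k) :
    Nonempty (SeparatingForms p) := by
  have hsep : ∀ j k, ∃ w : σ → K, j ≠ k → w ⬝ᵥ p k = 0 ∧ w ⬝ᵥ p j ≠ 0 := fun j k => by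
    by_cases h : j = k
    · exact ⟨0, fun h' => (h' h).elim⟩
    · obtain ⟨w, hw⟩ := exists_dotProduct_eq_zero_and_ne_zero (hpdist j k h)
      exact ⟨w, fun _ => hw⟩
  choose sep hsep using hsep
  obtain ⟨base, hbase⟩ := exists_forall_dotProduct_ne_zero hp0
  exact ⟨⟨sep, fun j k h => (hsep j k h).1, fun j k h => (hsep j k h).2, base, hbase⟩⟩

theorem finrank_sq_coneIdeal_inf_homogeneousSubmodule_add [Infinite K] [Fintype ι]
    [DecidableEq ι] {p : ι → σ → K} (hp0 : ∀ j, p j ≠ 0)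
    (hpdist : ∀ j k, j ≠ k → ∀ c : K, p j ≠ c • p k) {D : ℕ} (hD : 2 * Fintype.card ι ≤ D + 1) :
    Module.finrank K ((coneIdeal K p univ ^ 2).restrictScalars K ⊓ homogeneousSubmodule σ K D :
      Submodule K (MvPolynomial σ K)) + Fintype.card ι * Fintype.card σ =
      (Fintype.card σ + D - 1).choose D := by
  obtain ⟨s⟩ := SeparatingForms.nonempty hp0 hpdist
  set I := (coneIdeal K p univ ^ 2).restrictScalars K
  set V := homogeneousSubmodule σ K D
  have hT : s.hermiteSpace univ D ≤ V := s.hermiteSpace_le (by simpa using hD)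
  have hsup : I ⊓ V ⊔ s.hermiteSpace univ D = V := by
    rw [sup_comm, ← sup_inf_assoc_of_le _ hT, inf_eq_right, sup_comm]
    exact s.homogeneousSubmodule_le_sq_coneIdeal_sup_hermiteSpace univ (by simpa using hD)
  have hinf : I ⊓ V ⊓ s.hermiteSpace univ D = ⊥ :=
    eq_bot_iff.2 ((inf_le_inf_right _ inf_le_left).trans
      s.sq_coneIdeal_inf_hermiteSpace_univ_eq_bot.le)
  have : Module.Finite K (I ⊓ V : Submodule K _) := Submodule.finiteDimensional_of_le inf_le_right
  have : Module.Finite K (s.hermiteSpace univ D) := Submodule.finiteDimensional_of_le hT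
  have hdim := Submodule.finrank_sup_add_finrank_inf_eq (I ⊓ V) (s.hermiteSpace univ D)
  rwa [hsup, hinf, finrank_bot, add_zero, finrank_homogeneousSubmodule_s8,
    SeparatingForms.finrank_hermiteSpace_univ, eq_comm] at hdim

end MvPolynomial

theorem dim_degree_d_piece_of_sq_vanishingIdeal_general (n N d : ℕ)
    (hd : 2 * N - 1 ≤ d)
    (p : Fin N → (Fin (n+1) → ℂ)) (hp0 : ∀ j, p j ≠ 0)
    (hpdist : ∀ j j', j ≠ j' → ∀ c : ℂ, p j ≠ c • p j') :
    Module.finrank ℂ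
        (Submodule.restrictScalars ℂ ((vanishingIdealPoints p) ^ 2) ⊓ Vdn n d :
          Submodule ℂ (MvPolynomial (Fin (n+1)) ℂ)) + N * (n+1) =
      Nat.choose (d+n) n := by
  have hI : vanishingIdealPoints p = coneIdeal ℂ p univ := by
    ext f
    rw [mem_coneIdeal]
    simp only [mem_univ, true_imp_iff]
    rfl
  have := finrank_sq_coneIdeal_inf_homogeneousSubmodule_add hp0 hpdist (D := d) (by rw [Fintype.card_fin]; omega)
  rwa [Fintype.card_fin, Fintype.card_fin, show n + 1 + d - 1 = d + n by omega,
    Nat.choose_symm_add, ← hI] at this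

/-- For `N` distinct points of `ℙⁿ` with homogeneous vanishing ideal `I` and any
`d ≥ 2N−1`, the degree-`d` graded piece `I² ∩ V_{d,n}` of `I²` has codimension exactly
`N(n+1)` in `V_{d,n}` (stated additively: `dim + N(n+1) = binom(d+n,n) = dim V_{d,n}`). -/
theorem dim_degree_d_piece_of_sq_vanishingIdeal (n N d : ℕ) (hn : 1 ≤ n) (hN : 1 ≤ N)
    (hd : 2 * N - 1 ≤ d)
    (p : Fin N → (Fin (n+1) → ℂ)) (hp0 : ∀ j, p j ≠ 0)
    (hpdist : ∀ j j', j ≠ j' → ∀ c : ℂ, p j ≠ c • p j') :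
    Module.finrank ℂ
        (Submodule.restrictScalars ℂ ((vanishingIdealPoints p) ^ 2) ⊓ Vdn n d :
          Submodule ℂ (MvPolynomial (Fin (n+1)) ℂ)) + N * (n+1) =
      Nat.choose (d+n) n :=
  dim_degree_d_piece_of_sq_vanishingIdeal_general n N d hd p hp0 hpdist
end

section
/- Let n ≥ 1, k ≥ 1 and d ≥ 2k+1. Let p_1,…,p_k, q ∈ ℂ^{n+1} be nonzero vectors that are pairwise non-proportional (so they represent k+1 distinct points of ℙ^n). Then there exists a homogeneous polynomial f ∈ V_{d,n} that is singular at each p_j but is not singular at q. -/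
/-!
Choose linear forms `Lⱼ` with `Lⱼ(pⱼ) = 0`, `Lⱼ(q) = 1` (possible since `q ∉ ℂ pⱼ`) and `M` with
`M(q) = 1`, and take `f = L₁² ⋯ Lₖ² · M^(d-2k)`. Each `Lⱼ²` divides `f`, so `f` is singular at
`pⱼ`. If `f` were singular at `q`, Euler's identity `∑ xᵢ ∂ᵢf = d f` would give `d f(q) = 0`,
but `f(q) = 1` and `d ≠ 0`.
-/

open MvPolynomial

theorem Module.exists_dual_eq_zero_eq_one {K V : Type*} [Field K] [AddCommGroup V] [Module K V]
    {p q : V} (h : q ∉ K ∙ p) : ∃ φ : Dual K V, φ p = 0 ∧ φ q = 1 := by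
  obtain ⟨φ, hφ⟩ := Projective.exists_dual_eq_one K (x := (K ∙ p).mkQ q) (by simpa using h)
  have hp : (K ∙ p).mkQ p = 0 :=
    (Submodule.Quotient.mk_eq_zero _).2 (Submodule.mem_span_singleton_self p)
  exact ⟨φ ∘ₗ (K ∙ p).mkQ, by simp [hp], hφ⟩

namespace MvPolynomial

variable {σ R : Type*} [CommRing R]

section Dual

variable [Fintype σ] [DecidableEq σ]

noncomputable def ofDual (φ : Module.Dual R (σ → R)) : MvPolynomial σ R :=
  ∑ i, C (φ (Pi.single i 1)) * X i

@[simp]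
theorem eval_ofDual (φ : Module.Dual R (σ → R)) (x : σ → R) :
    eval x (ofDual φ) = φ x := by
  conv_rhs => rw [pi_eq_sum_univ' x]
  simp [ofDual, mul_comm]

theorem isHomogeneous_ofDual (φ : Module.Dual R (σ → R)) : (ofDual φ).IsHomogeneous 1 :=
  IsHomogeneous.sum _ _ _ fun i _ => isHomogeneous_C_mul_X _ i

end Dual

theorem eval_pderiv_eq_zero_of_sq_dvd {f L : MvPolynomial σ R} {p : σ → R}
    (hL : eval p L = 0) (hf : L ^ 2 ∣ f) (i : σ) : eval p (pderiv i f) = 0 := by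
  obtain ⟨g, rfl⟩ := hf
  simp [hL]

theorem IsHomogeneous.eval_eq_zero_of_forall_eval_pderiv_eq_zero [Fintype σ] [IsDomain R]
    [CharZero R] {f : MvPolynomial σ R} {n : ℕ} (hf : f.IsHomogeneous n) (hn : n ≠ 0)
    {q : σ → R} (hq : ∀ i, eval q (pderiv i f) = 0) : eval q f = 0 := by
  have euler := congrArg (eval q) hf.sum_X_mul_pderiv
  simp only [map_sum, map_mul, eval_X, hq, mul_zero, Finset.sum_const_zero, nsmul_eq_mul,
    map_natCast] at euler
  exact (mul_eq_zero.1 euler.symm).resolve_left (by exact_mod_cast hn)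

end MvPolynomial

theorem exists_homogeneous_singular_at_points_not_at_general (n k d : ℕ)
    (hd : 2 * k + 1 ≤ d)
    (p : Fin k → (Fin (n+1) → ℂ)) (q : Fin (n+1) → ℂ)
    (hq0 : q ≠ 0)
    (hq : ∀ j, ∀ c : ℂ, q ≠ c • p j) :
    ∃ f : MvPolynomial (Fin (n+1)) ℂ, f.IsHomogeneous d ∧
      (∀ j, SingularAt f (p j)) ∧ ¬ SingularAt f q := by
  have hq_span (j : Fin k) : q ∉ ℂ ∙ p j := fun hmem => by
    obtain ⟨c, hc⟩ := Submodule.mem_span_singleton.1 hmem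
    exact hq j c hc.symm
  choose L hLp hLq using fun j => Module.exists_dual_eq_zero_eq_one (hq_span j)
  obtain ⟨M, hMq⟩ := Module.Projective.exists_dual_eq_one ℂ hq0
  set f := (∏ j, ofDual (L j) ^ 2) * ofDual M ^ (d - 2 * k)
  have hf : f.IsHomogeneous d := by
    convert (IsHomogeneous.prod _ _ _ fun j _ => (isHomogeneous_ofDual (L j)).pow 2).mul
      ((isHomogeneous_ofDual M).pow (d - 2 * k)) using 1
    simp only [Finset.sum_const, Finset.card_univ, Fintype.card_fin, smul_eq_mul]
    omega
  refine ⟨f, hf, fun j => ?_, fun hsing => ?_⟩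
  · refine eval_pderiv_eq_zero_of_sq_dvd (L := ofDual (L j)) (by simp [hLp]) ?_
    exact (Finset.dvd_prod_of_mem _ (Finset.mem_univ j)).mul_right _
  · simpa [f, hLq, hMq] using hf.eval_eq_zero_of_forall_eval_pderiv_eq_zero (by omega) hsing

/-- Given `k+1` distinct points `[p 0], …, [p (k-1)], [q]` of `ℙⁿ` and `d ≥ 2k+1`, there is
a homogeneous polynomial of degree `d` singular at each `p j` but non-singular at `q`. -/
theorem exists_homogeneous_singular_at_points_not_at (n k d : ℕ) (hn : 1 ≤ n) (hk : 1 ≤ k)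
    (hd : 2 * k + 1 ≤ d)
    (p : Fin k → (Fin (n+1) → ℂ)) (q : Fin (n+1) → ℂ)
    (hp0 : ∀ j, p j ≠ 0) (hq0 : q ≠ 0)
    (hpdist : ∀ j j', j ≠ j' → ∀ c : ℂ, p j ≠ c • p j')
    (hq : ∀ j, ∀ c : ℂ, q ≠ c • p j) :
    ∃ f : MvPolynomial (Fin (n+1)) ℂ, f.IsHomogeneous d ∧
      (∀ j, SingularAt f (p j)) ∧ ¬ SingularAt f q :=
  exists_homogeneous_singular_at_points_not_at_general n k d hd p q hq0 hq
end
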